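/- Suppose q/p is not a root of unity and let α ∈ ℂ. On the complex vector space with basis {v_j : j ∈ ℤ}, define operators L_n (n ∈ ℤ) by L_n v_j = p^{−n−j−1}[n+j+1]_{p,q} v_{n+j} for j ≠ −1, and L_n v_{−1} = (−q^n [−n]_{p,q} + [−n]_{p,q} [n+1]_{p,q} p^{−n} q^n α) v_{n−1}. Then these operators satisfy the V_{p,q}-module relation: for all m, n ∈ ℤ and all j ∈ ℤ, (p^{−n} q^n L_n L_m − p^{−m} q^m L_m L_n) v_j = ([m]_{p,q}/p^m − [n]_{p,q}/p^n) L_{m+n} v_j; that is, V_{p,q}(α) is a V_{p,q}-module. -/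

import Mathlib

/-- The `(p,q)`-quantum integer `[n]_{p,q} = (p^n - q^n)/(p - q)`. -/
noncomputable def qint (p q : ℂ) (n : ℤ) : ℂ := (p ^ n - q ^ n) / (p - q)

/-- The defining relation of a `V_{p,q}`-module. -/
def IsVpqModule (p q : ℂ) {M : Type} [AddCommGroup M] [Module ℂ M]
    (L : ℤ → M →ₗ[ℂ] M) : Prop :=
  ∀ m n : ℤ, ∀ v : M,
    (p ^ (-n) * q ^ n) • L n (L m v) - (p ^ (-m) * q ^ m) • L m (L n v) =
      (qint p q m / p ^ m - qint p q n / p ^ n) • L (m + n) v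

/-- The module `V_{p,q}(α)`: `L_n v_j = p^{-n-j-1}[n+j+1] v_{n+j}` for `j ≠ -1` and
`L_n v_{-1} = (-q^n[-n] + [-n][n+1] p^{-n} q^n α) v_{n-1}`. -/
noncomputable def Lalpha (p q α : ℂ) (n : ℤ) : (ℤ →₀ ℂ) →ₗ[ℂ] (ℤ →₀ ℂ) :=
  Finsupp.lsum ℂ fun j =>
    (if j = -1 then
        -q ^ n * qint p q (-n) + qint p q (-n) * qint p q (n + 1) * p ^ (-n) * q ^ n * α
      else p ^ (-n - j - 1) * qint p q (n + j + 1)) • Finsupp.lsingle (n + j)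

/-- The coefficient of `L_n` on the basis vector `v_j`. -/
noncomputable def cc (p q α : ℂ) (n j : ℤ) : ℂ :=
  if j = -1 then
      -q ^ n * qint p q (-n) + qint p q (-n) * qint p q (n + 1) * p ^ (-n) * q ^ n * α
    else p ^ (-n - j - 1) * qint p q (n + j + 1)

lemma Lalpha_single (p q α : ℂ) (n j : ℤ) (a : ℂ) :
    Lalpha p q α n (Finsupp.single j a) = Finsupp.single (n + j) (cc p q α n j * a) := by
  simp only [Lalpha, cc, Finsupp.lsum_apply, Finsupp.sum_single_index, map_zero,
    LinearMap.smul_apply, Finsupp.lsingle_apply, Finsupp.smul_single, smul_eq_mul]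

set_option maxHeartbeats 3200000 in
lemma key (p q α : ℂ) (hp : p ≠ 0) (hq : q ≠ 0) (hpq : p ≠ q) (m n j : ℤ) :
    (p ^ (-n) * q ^ n) * (cc p q α n (m + j) * cc p q α m j) -
      (p ^ (-m) * q ^ m) * (cc p q α m (n + j) * cc p q α n j) =
    (qint p q m / p ^ m - qint p q n / p ^ n) * cc p q α (m + n) j := by
  have hpq' : p - q ≠ 0 := sub_ne_zero.mpr hpq
  have hpn : p ^ n ≠ 0 := zpow_ne_zero _ hp
  have hpm : p ^ m ≠ 0 := zpow_ne_zero _ hp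
  have hpj : p ^ j ≠ 0 := zpow_ne_zero _ hp
  have hqn : q ^ n ≠ 0 := zpow_ne_zero _ hq
  have hqm : q ^ m ≠ 0 := zpow_ne_zero _ hq
  have hqj : q ^ j ≠ 0 := zpow_ne_zero _ hq
  have hqe : ∀ k : ℤ, qint p q k = (p ^ k - q ^ k) * (p - q)⁻¹ := fun k => div_eq_mul_inv _ _
  simp only [cc, hqe]
  generalize (p - q)⁻¹ = e
  split_ifs with h1 h2 h3 h4 h5 h6 h7
  · subst h2; obtain rfl : m = 0 := by omega
    obtain rfl : n = 0 := by omega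
    simp only [zpow_neg, zpow_add₀ hp, zpow_add₀ hq, zpow_sub₀ hp, zpow_sub₀ hq,
      zpow_one, zpow_zero]
    field_simp
    ring
  · subst h2; obtain rfl : m = 0 := by omega
    simp only [zpow_neg, zpow_add₀ hp, zpow_add₀ hq, zpow_sub₀ hp, zpow_sub₀ hq,
      zpow_one, zpow_zero]
    field_simp
    ring
  · obtain rfl : j = -1 - m := by omega
    obtain rfl : n = m := by omega
    simp only [zpow_neg, zpow_add₀ hp, zpow_add₀ hq, zpow_sub₀ hp, zpow_sub₀ hq,
      zpow_one, zpow_zero]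
    field_simp
    ring
  · obtain rfl : j = -1 - m := by omega
    simp only [zpow_neg, zpow_add₀ hp, zpow_add₀ hq, zpow_sub₀ hp, zpow_sub₀ hq,
      zpow_one, zpow_zero]
    field_simp
    ring
  · subst h5; obtain rfl : n = 0 := by omega
    simp only [zpow_neg, zpow_add₀ hp, zpow_add₀ hq, zpow_sub₀ hp, zpow_sub₀ hq,
      zpow_one, zpow_zero]
    field_simp
    ring
  · subst h5
    simp only [zpow_neg, zpow_add₀ hp, zpow_add₀ hq, zpow_sub₀ hp, zpow_sub₀ hq,
      zpow_one, zpow_zero]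
    field_simp
    ring
  · obtain rfl : j = -1 - n := by omega
    simp only [zpow_neg, zpow_add₀ hp, zpow_add₀ hq, zpow_sub₀ hp, zpow_sub₀ hq,
      zpow_one, zpow_zero]
    field_simp
    ring
  · simp only [zpow_neg, zpow_add₀ hp, zpow_add₀ hq, zpow_sub₀ hp, zpow_sub₀ hq,
      zpow_one, zpow_zero]
    field_simp
    ring

/-- The operators of `V_{p,q}(α)` satisfy the `V_{p,q}`-module relation. -/
theorem Valpha_is_VpqModule (p q : ℂ) (hp : p ≠ 0) (hq : q ≠ 0) (hpq : p ≠ q)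
    (hroot : ∀ n : ℤ, n ≠ 0 → (q / p) ^ n ≠ 1) (α : ℂ) :
    IsVpqModule p q (Lalpha p q α) := by
  intro m n v
  induction v using Finsupp.induction_linear with
  | zero => simp
  | add f g hf hg =>
      simp only [map_add, smul_add]
      rw [add_sub_add_comm, hf, hg]
  | single j b =>
      simp only [Lalpha_single]
      have e1 : n + (m + j) = m + n + j := by ring
      have e2 : m + (n + j) = m + n + j := by ring
      rw [e1, e2, Finsupp.smul_single, Finsupp.smul_single, Finsupp.smul_single,
        ← Finsupp.single_sub]
      congr 1
      simp only [smul_eq_mul]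
      linear_combination (key p q α hp hq hpq m n j) * b
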